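/- Fix p ∈ (1,∞). (i) If σ₁(e) ≤ σ₂(e) for all e ∈ E, then Mod_{p,σ₁}(Γ) ≤ Mod_{p,σ₂}(Γ). (ii) If moreover σ₁ and σ₂ agree at every edge except possibly a single edge e₀, where σ₁(e₀) ≤ σ₂(e₀), then the unique optimal densities satisfy ρ*_{σ₂}(e₀) ≤ ρ*_{σ₁}(e₀): increasing the weight of a single edge cannot increase the optimal density on that edge. -/

import Mathlib

/-!
Part (i): every admissible density has smaller `σ₁`-energy than `σ₂`-energy, and the admissible
set does not depend on the weights (if it is empty, both moduli are the junk value `sInf ∅ = 0`).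

Part (ii): if `σ₂` exceeds `σ₁` only at `e₀`, by `Δ > 0`, then `E_{σ₂} = E_{σ₁} + Δ ρ(e₀)^p`;
adding the two optimality inequalities `E_{σ₁}(ρ₁) ≤ E_{σ₁}(ρ₂)` and `E_{σ₂}(ρ₂) ≤ E_{σ₂}(ρ₁)`
gives `Δ ρ₂(e₀)^p ≤ Δ ρ₁(e₀)^p`. When `Δ = 0` the two problems coincide, and strict convexity
of the energy on the convex admissible set forces `ρ₁ = ρ₂`.
-/

open Finset

noncomputable section

/-- A density `ρ` is admissible for the usage matrix `N` if it is nonnegative and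
every object has `ρ`-length at least 1. -/
def IsAdmissible {E Γ : Type*} [Fintype E] (N : Γ → E → ℝ) (ρ : E → ℝ) : Prop :=
  (∀ e, 0 ≤ ρ e) ∧ ∀ γ : Γ, 1 ≤ ∑ e, N γ e * ρ e

/-- The `p`-energy of a density. -/
def pEnergy {E : Type*} [Fintype E] (σ : E → ℝ) (p : ℝ) (ρ : E → ℝ) : ℝ :=
  ∑ e, σ e * ρ e ^ p

/-- The `p`-modulus: the infimum of the `p`-energy over admissible densities. -/
def pModulus {E Γ : Type*} [Fintype E] (N : Γ → E → ℝ) (σ : E → ℝ) (p : ℝ) : ℝ :=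
  sInf {x | ∃ ρ : E → ℝ, IsAdmissible N ρ ∧ x = pEnergy σ p ρ}

section

variable {E Γ : Type*} [Fintype E]

def IsOptimalDensity (N : Γ → E → ℝ) (σ : E → ℝ) (p : ℝ) (ρ : E → ℝ) : Prop :=
  IsAdmissible N ρ ∧ pEnergy σ p ρ = pModulus N σ p

theorem convex_setOf_isAdmissible (N : Γ → E → ℝ) : Convex ℝ {ρ : E → ℝ | IsAdmissible N ρ} := by
  intro x hx y hy a b ha hb hab
  refine ⟨fun e => ?_, fun γ => ?_⟩
  · have := hx.1 e; have := hy.1 e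
    simp only [Pi.add_apply, Pi.smul_apply, smul_eq_mul]
    positivity
  · have hsum : ∑ e, N γ e * (a • x + b • y) e
        = a * ∑ e, N γ e * x e + b * ∑ e, N γ e * y e := by
      simp only [Pi.add_apply, Pi.smul_apply, smul_eq_mul, mul_sum, ← sum_add_distrib]
      exact sum_congr rfl fun e _ => by ring
    rw [hsum]
    nlinarith [hx.2 γ, hy.2 γ]

theorem pEnergy_nonneg {σ : E → ℝ} (hσ : ∀ e, 0 ≤ σ e) (p : ℝ) {ρ : E → ℝ}
    (hρ : ∀ e, 0 ≤ ρ e) : 0 ≤ pEnergy σ p ρ :=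
  sum_nonneg fun e _ => mul_nonneg (hσ e) (Real.rpow_nonneg (hρ e) p)

theorem pModulus_le_pEnergy (N : Γ → E → ℝ) {σ : E → ℝ} (hσ : ∀ e, 0 ≤ σ e) (p : ℝ)
    {ρ : E → ℝ} (hρ : IsAdmissible N ρ) : pModulus N σ p ≤ pEnergy σ p ρ :=
  csInf_le ⟨0, by rintro x ⟨ρ', hρ', rfl⟩; exact pEnergy_nonneg hσ p hρ'.1⟩ ⟨ρ, hρ, rfl⟩

theorem pModulus_eq_zero_of_forall_not_isAdmissible (N : Γ → E → ℝ) (σ : E → ℝ) (p : ℝ)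
    (h : ∀ ρ, ¬IsAdmissible N ρ) : pModulus N σ p = 0 := by
  simp [pModulus, h]

theorem pModulus_mono (N : Γ → E → ℝ) {σ₁ σ₂ : E → ℝ} (hσ₁ : ∀ e, 0 ≤ σ₁ e)
    (hσ : ∀ e, σ₁ e ≤ σ₂ e) (p : ℝ) : pModulus N σ₁ p ≤ pModulus N σ₂ p := by
  by_cases hadm : ∃ ρ, IsAdmissible N ρ
  · obtain ⟨ρ₀, hρ₀⟩ := hadm
    refine le_csInf ⟨_, ρ₀, hρ₀, rfl⟩ ?_
    rintro x ⟨ρ, hρ, rfl⟩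
    calc pModulus N σ₁ p ≤ pEnergy σ₁ p ρ := pModulus_le_pEnergy N hσ₁ p hρ
      _ ≤ pEnergy σ₂ p ρ := sum_le_sum fun e _ =>
          mul_le_mul_of_nonneg_right (hσ e) (Real.rpow_nonneg (hρ.1 e) p)
  · simp only [pModulus_eq_zero_of_forall_not_isAdmissible N _ p (not_exists.1 hadm), le_refl]

theorem strictConvexOn_pEnergy {σ : E → ℝ} (hσ : ∀ e, 0 < σ e) {p : ℝ} (hp : 1 < p) :
    StrictConvexOn ℝ {ρ : E → ℝ | ∀ e, 0 ≤ ρ e} (pEnergy σ p) := by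
  have hrpow := strictConvexOn_rpow hp
  refine ⟨fun x hx y hy a b ha hb hab e => ?_, fun x hx y hy hxy a b ha hb hab => ?_⟩
  · have := hx e; have := hy e
    simp only [Pi.add_apply, Pi.smul_apply, smul_eq_mul]
    positivity
  obtain ⟨e₀, he₀⟩ := Function.ne_iff.1 hxy
  have hterm : ∀ e, x e ≠ y e →
      σ e * (a * x e + b * y e) ^ p < a * (σ e * x e ^ p) + b * (σ e * y e ^ p) := by
    intro e hne
    have := mul_lt_mul_of_pos_left
      (hrpow.2 (Set.mem_Ici.2 (hx e)) (Set.mem_Ici.2 (hy e)) hne ha hb hab) (hσ e)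
    simp only [smul_eq_mul] at this
    linarith
  have hterm_le : ∀ e,
      σ e * (a * x e + b * y e) ^ p ≤ a * (σ e * x e ^ p) + b * (σ e * y e ^ p) := by
    intro e
    by_cases hne : x e = y e
    · rw [hne, ← add_mul, hab, one_mul, ← add_mul, hab, one_mul]
    · exact (hterm e hne).le
  simp only [pEnergy, Pi.add_apply, Pi.smul_apply, smul_eq_mul, mul_sum, ← sum_add_distrib]
  exact sum_lt_sum (fun e _ => hterm_le e) ⟨e₀, mem_univ e₀, hterm e₀ he₀⟩

theorem pEnergy_eq_add_of_eq_of_ne {σ₁ σ₂ : E → ℝ} {e₀ : E}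
    (hσ : ∀ e, e ≠ e₀ → σ₁ e = σ₂ e) (p : ℝ) (ρ : E → ℝ) :
    pEnergy σ₂ p ρ = pEnergy σ₁ p ρ + (σ₂ e₀ - σ₁ e₀) * ρ e₀ ^ p := by
  have hdiff : pEnergy σ₂ p ρ - pEnergy σ₁ p ρ = ∑ e, (σ₂ e - σ₁ e) * ρ e ^ p := by
    simp only [pEnergy, ← sum_sub_distrib, sub_mul]
  rw [sum_eq_single e₀ (fun e _ he => by rw [hσ e he, sub_self, zero_mul])
    (fun h => absurd (mem_univ e₀) h)] at hdiff
  linarith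

namespace IsOptimalDensity

variable {N : Γ → E → ℝ} {p : ℝ}

theorem pEnergy_le {σ : E → ℝ} (hσ : ∀ e, 0 ≤ σ e) {ρ ρ' : E → ℝ}
    (hρ : IsOptimalDensity N σ p ρ) (hρ' : IsAdmissible N ρ') :
    pEnergy σ p ρ ≤ pEnergy σ p ρ' :=
  hρ.2 ▸ pModulus_le_pEnergy N hσ p hρ'

theorem unique {σ : E → ℝ} (hσ : ∀ e, 0 < σ e) (hp : 1 < p) {ρ₁ ρ₂ : E → ℝ}
    (h₁ : IsOptimalDensity N σ p ρ₁) (h₂ : IsOptimalDensity N σ p ρ₂) : ρ₁ = ρ₂ :=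
  ((strictConvexOn_pEnergy hσ hp).subset (fun _ hρ => hρ.1) (convex_setOf_isAdmissible N))
    |>.eq_of_isMinOn (fun _ hρ => h₁.pEnergy_le (fun e => (hσ e).le) hρ)
      (fun _ hρ => h₂.pEnergy_le (fun e => (hσ e).le) hρ) h₁.1 h₂.1

theorem apply_le_of_le_of_eq_of_ne {σ₁ σ₂ : E → ℝ} (hσ₁ : ∀ e, 0 < σ₁ e)
    (hσ₂ : ∀ e, 0 ≤ σ₂ e) (hp : 1 < p) {e₀ : E} (hσ : ∀ e, e ≠ e₀ → σ₁ e = σ₂ e)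
    (hσe₀ : σ₁ e₀ ≤ σ₂ e₀) {ρ₁ ρ₂ : E → ℝ}
    (h₁ : IsOptimalDensity N σ₁ p ρ₁) (h₂ : IsOptimalDensity N σ₂ p ρ₂) : ρ₂ e₀ ≤ ρ₁ e₀ := by
  rcases hσe₀.lt_or_eq with hlt | heq
  · have h₁₂ := h₁.pEnergy_le (fun e => (hσ₁ e).le) h₂.1
    have h₂₁ := h₂.pEnergy_le hσ₂ h₁.1
    rw [pEnergy_eq_add_of_eq_of_ne hσ, pEnergy_eq_add_of_eq_of_ne hσ] at h₂₁
    have hpow : ρ₂ e₀ ^ p ≤ ρ₁ e₀ ^ p :=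
      le_of_mul_le_mul_left (by linarith) (sub_pos.2 hlt)
    exact (Real.rpow_le_rpow_iff (h₂.1.1 e₀) (h₁.1.1 e₀) (by linarith)).1 hpow
  · have hσ_eq : σ₁ = σ₂ := funext fun e => by
      by_cases he : e = e₀
      · exact he ▸ heq
      · exact hσ e he
    subst hσ_eq
    rw [h₁.unique hσ₁ hp h₂]

end IsOptimalDensity

end

theorem modulus_monotone_in_sigma_general
    {E Γ : Type*} [Fintype E]
    (N : Γ → E → ℝ)
    (p : ℝ) (hp : 1 < p)
    (σ₁ σ₂ : E → ℝ) (hσ₁ : ∀ e, 0 < σ₁ e) (hσ₂ : ∀ e, 0 < σ₂ e) :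
    ((∀ e, σ₁ e ≤ σ₂ e) → pModulus N σ₁ p ≤ pModulus N σ₂ p) ∧
    (∀ e₀ : E, (∀ e, e ≠ e₀ → σ₁ e = σ₂ e) → σ₁ e₀ ≤ σ₂ e₀ →
      ∀ ρ₁ ρ₂ : E → ℝ,
        IsAdmissible N ρ₁ → pEnergy σ₁ p ρ₁ = pModulus N σ₁ p →
        IsAdmissible N ρ₂ → pEnergy σ₂ p ρ₂ = pModulus N σ₂ p →
        ρ₂ e₀ ≤ ρ₁ e₀) :=
  ⟨fun hσ => pModulus_mono N (fun e => (hσ₁ e).le) hσ p,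
    fun _ hσ hσe₀ _ _ hρ₁ hE₁ hρ₂ hE₂ =>
      IsOptimalDensity.apply_le_of_le_of_eq_of_ne hσ₁ (fun e => (hσ₂ e).le) hp hσ hσe₀
        ⟨hρ₁, hE₁⟩ ⟨hρ₂, hE₂⟩⟩

/-- (i) the modulus is nondecreasing in the weights; (ii) increasing the weight
of a single edge cannot increase the optimal density on that edge. -/
theorem modulus_monotone_in_sigma
    {E Γ : Type*} [Fintype E] [Fintype Γ] [Nonempty E] [Nonempty Γ]
    (N : Γ → E → ℝ) (hN : ∀ γ e, 0 ≤ N γ e) (hrow : ∀ γ, ∃ e, 0 < N γ e)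
    (p : ℝ) (hp : 1 < p)
    (σ₁ σ₂ : E → ℝ) (hσ₁ : ∀ e, 0 < σ₁ e) (hσ₂ : ∀ e, 0 < σ₂ e) :
    ((∀ e, σ₁ e ≤ σ₂ e) → pModulus N σ₁ p ≤ pModulus N σ₂ p) ∧
    (∀ e₀ : E, (∀ e, e ≠ e₀ → σ₁ e = σ₂ e) → σ₁ e₀ ≤ σ₂ e₀ →
      ∀ ρ₁ ρ₂ : E → ℝ,
        IsAdmissible N ρ₁ → pEnergy σ₁ p ρ₁ = pModulus N σ₁ p →
        IsAdmissible N ρ₂ → pEnergy σ₂ p ρ₂ = pModulus N σ₂ p →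
        ρ₂ e₀ ≤ ρ₁ e₀) :=
  modulus_monotone_in_sigma_general N p hp σ₁ σ₂ hσ₁ hσ₂
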